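/- arXiv:1210.7190 — 6 statements merged into one kernel-verified Lean document; each statement's English description precedes it below -/
import Mathlib

section
/- Let F_q be a finite field, let k ≤ n, and let κ be a k×n matrix over F_q of rank k. Let A ⊆ F_q^k be a linearly independent set with |A| = k, let W ⊆ F_q^k be a linearly independent set with |W| ≤ k, and let E be a subspace of F_q^n with dim(E) = |W \ A| and E ∩ rowsp(κ) = {0}. Set W' = ⟨W ∩ A⟩_κ + E. Let C be a set of k-dimensional subspaces of F_q^n with rowsp(κ) ∈ C such that d_S(U,V) ≥ d for all distinct U, V ∈ C. If 2·d_Δ(A,W) ≤ d − 1, then rowsp(κ) is the unique element U of C satisfying 2·d_S(W', U) ≤ d − 1. -/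
open Module Submodule

private lemma ds_triangle {F V : Type*} [Field F] [AddCommGroup V] [Module F V]
    [FiniteDimensional F V] (U W X : Submodule F V) :
    finrank F ↥(U ⊔ X) - finrank F ↥(U ⊓ X) ≤
      (finrank F ↥(U ⊔ W) - finrank F ↥(U ⊓ W)) +
      (finrank F ↥(W ⊔ X) - finrank F ↥(W ⊓ X)) := by
  have e1 := Submodule.finrank_sup_add_finrank_inf_eq (U ⊔ W) (W ⊔ X)
  have e2 := Submodule.finrank_sup_add_finrank_inf_eq (U ⊓ W) (W ⊓ X)
  have m1 : finrank F ↥(U ⊔ X) ≤ finrank F ↥((U ⊔ W) ⊔ (W ⊔ X)) :=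
    Submodule.finrank_mono (sup_le (le_sup_left.trans le_sup_left)
      (le_sup_right.trans le_sup_right))
  have m2 : finrank F ↥W ≤ finrank F ↥((U ⊔ W) ⊓ (W ⊔ X)) :=
    Submodule.finrank_mono (le_inf le_sup_right le_sup_left)
  have m3 : finrank F ↥((U ⊓ W) ⊔ (W ⊓ X)) ≤ finrank F ↥W :=
    Submodule.finrank_mono (sup_le inf_le_right inf_le_left)
  have m4 : finrank F ↥((U ⊓ W) ⊓ (W ⊓ X)) ≤ finrank F ↥(U ⊓ X) :=
    Submodule.finrank_mono (le_inf (inf_le_left.trans inf_le_left)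
      (inf_le_right.trans inf_le_right))
  have l1 : finrank F ↥(U ⊓ X) ≤ finrank F ↥(U ⊔ X) :=
    Submodule.finrank_mono (inf_le_left.trans le_sup_left)
  have l2 : finrank F ↥(U ⊓ W) ≤ finrank F ↥(U ⊔ W) :=
    Submodule.finrank_mono (inf_le_left.trans le_sup_left)
  have l3 : finrank F ↥(W ⊓ X) ≤ finrank F ↥(W ⊔ X) :=
    Submodule.finrank_mono (inf_le_left.trans le_sup_left)
  omega

private lemma eq_of_ds_zero {F V : Type*} [Field F] [AddCommGroup V] [Module F V]
    [FiniteDimensional F V] {U X : Submodule F V}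
    (h : finrank F ↥(U ⊔ X) ≤ finrank F ↥(U ⊓ X)) : U = X := by
  have hle : U ⊓ X ≤ U ⊔ X := inf_le_left.trans le_sup_left
  have heq : U ⊓ X = U ⊔ X := Submodule.eq_of_le_of_finrank_le hle h
  have h1 : U ≤ U ⊓ X := heq ▸ le_sup_left
  have h2 : X ≤ U ⊓ X := heq ▸ le_sup_right
  exact le_antisymm (h1.trans inf_le_right) (h2.trans inf_le_left)

/-- In the subspace fuzzy vault setting, if `C` is a constant dimension code of
`k`-dimensional subspaces of `F^n` with minimum subspace distance `d`, containing the row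
space of the full-rank key matrix `κ`, and if `2 · d_Δ(A,W) ≤ d − 1`, then the row space of
`κ` is the unique element `U` of `C` with `2 · d_S(W', U) ≤ d − 1`, where
`W' = ⟨W ∩ A⟩_κ + E`. -/
theorem fuzzy_vault_unique_decoding
    (F : Type*) [Field F] [Fintype F] [DecidableEq F] (k n : ℕ) (hkn : k ≤ n)
    (κ : Matrix (Fin k) (Fin n) F) (hκ : κ.rank = k)
    (A W : Finset (Fin k → F))
    (hAind : LinearIndependent F (Subtype.val : {x : Fin k → F // x ∈ A} → (Fin k → F)))
    (hAcard : A.card = k)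
    (hWind : LinearIndependent F (Subtype.val : {x : Fin k → F // x ∈ W} → (Fin k → F)))
    (hWcard : W.card ≤ k)
    (E : Submodule F (Fin n → F))
    (hEdim : Module.finrank F E = (W \ A).card)
    (hEκ : E ⊓ LinearMap.range κ.vecMulLinear = ⊥)
    (W' : Submodule F (Fin n → F))
    (hW' : W' = Submodule.span F ((fun x => Matrix.vecMul x κ) '' ↑(W ∩ A)) ⊔ E)
    (C : Set (Submodule F (Fin n → F))) (d : ℕ)
    (hCdim : ∀ U ∈ C, Module.finrank F U = k)
    (hκC : LinearMap.range κ.vecMulLinear ∈ C)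
    (hCdist : ∀ U ∈ C, ∀ V ∈ C, U ≠ V →
      d ≤ Module.finrank F ↥(U ⊔ V) - Module.finrank F ↥(U ⊓ V))
    (hAW : 2 * ((A \ W).card + (W \ A).card) ≤ d - 1) :
    2 * (Module.finrank F ↥(W' ⊔ LinearMap.range κ.vecMulLinear) -
          Module.finrank F ↥(W' ⊓ LinearMap.range κ.vecMulLinear)) ≤ d - 1 ∧
      ∀ U ∈ C, 2 * (Module.finrank F ↥(W' ⊔ U) - Module.finrank F ↥(W' ⊓ U)) ≤ d - 1 →
        U = LinearMap.range κ.vecMulLinear := by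
  set K := LinearMap.range κ.vecMulLinear with hK
  -- rank of K
  have hKrank : finrank F ↥K = k := by
    have h1 : κ.transpose.rank = k := by rw [Matrix.rank_transpose, hκ]
    rwa [Matrix.rank, Matrix.mulVecLin_transpose] at h1
  -- injectivity of the key map
  have hinj : Function.Injective κ.vecMulLinear := by
    rw [← LinearMap.ker_eq_bot]
    have h2 := LinearMap.finrank_range_add_finrank_ker κ.vecMulLinear
    rw [Module.finrank_fin_fun, ← hK, hKrank] at h2
    have : finrank F ↥(LinearMap.ker κ.vecMulLinear) = 0 := by omega
    exact Submodule.finrank_eq_zero.mp this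
  set S := Submodule.span F ((fun x => Matrix.vecMul x κ) '' ↑(W ∩ A)) with hS
  have hfun : (fun x => Matrix.vecMul x κ) = ⇑κ.vecMulLinear := rfl
  have hSK : S ≤ K := by
    rw [hS, Submodule.span_le]
    rintro _ ⟨x, -, rfl⟩
    exact ⟨x, rfl⟩
  -- linear independence of W ∩ A
  have hWAind : LinearIndependent F (Subtype.val : ↑(↑(W ∩ A) : Set (Fin k → F)) → (Fin k → F)) :=
    hWind.comp (fun x : ↑(↑(W ∩ A) : Set (Fin k → F)) =>
        (⟨x.1, Finset.mem_of_mem_inter_left x.2⟩ : {x : Fin k → F // x ∈ W}))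
      (fun a b h => Subtype.ext (Subtype.mk.inj h))
  have hSrank : finrank F ↥S = (W ∩ A).card := by
    rw [hS, hfun, Submodule.span_image]
    rw [← LinearEquiv.finrank_eq (Submodule.equivMapOfInjective _ hinj _)]
    exact finrank_span_finset_eq_card hWAind
  -- the intersection W' ⊓ K is exactly S
  have hWiK : W' ⊓ K = S := by
    rw [hW', sup_inf_assoc_of_le E hSK, hEκ, sup_bot_eq]
  -- W' ⊔ K = E ⊔ K
  have hWsK : W' ⊔ K = E ⊔ K := by
    rw [hW', sup_assoc]
    exact sup_eq_right.mpr (hSK.trans le_sup_right)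
  have hEK : finrank F ↥(E ⊔ K) = (W \ A).card + k := by
    have h3 := Submodule.finrank_sup_add_finrank_inf_eq E K
    rw [hEκ, finrank_bot, add_zero, hEdim, hKrank] at h3
    exact h3
  -- cardinality bookkeeping
  have cW : (W ∩ A).card + (W \ A).card = W.card := Finset.card_inter_add_card_sdiff W A
  have cA : (A ∩ W).card + (A \ W).card = A.card := Finset.card_inter_add_card_sdiff A W
  rw [Finset.inter_comm] at cA
  -- the distance from W' to K
  have hdsK : finrank F ↥(W' ⊔ K) - finrank F ↥(W' ⊓ K) = (A \ W).card + (W \ A).card := by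
    rw [hWiK, hWsK, hSrank, hEK]
    omega
  have hgoal1 : 2 * (finrank F ↥(W' ⊔ K) - finrank F ↥(W' ⊓ K)) ≤ d - 1 := by
    rw [hdsK]; exact hAW
  refine ⟨hgoal1, ?_⟩
  intro U hU h2
  by_contra hne
  have htri := ds_triangle U W' K
  have hcomm1 : finrank F ↥(U ⊔ W') = finrank F ↥(W' ⊔ U) := by rw [sup_comm]
  have hcomm2 : finrank F ↥(U ⊓ W') = finrank F ↥(W' ⊓ U) := by rw [inf_comm]
  rw [hcomm1, hcomm2] at htri
  rcases Nat.eq_zero_or_pos d with hd0 | hdpos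
  · -- d = 0 : both distances are 0, so U = W' = K
    subst hd0
    have hz1 : finrank F ↥(W' ⊔ U) ≤ finrank F ↥(W' ⊓ U) := by
      have l : finrank F ↥(W' ⊓ U) ≤ finrank F ↥(W' ⊔ U) :=
        Submodule.finrank_mono (inf_le_left.trans le_sup_left)
      omega
    have hz2 : finrank F ↥(W' ⊔ K) ≤ finrank F ↥(W' ⊓ K) := by
      have l : finrank F ↥(W' ⊓ K) ≤ finrank F ↥(W' ⊔ K) :=
        Submodule.finrank_mono (inf_le_left.trans le_sup_left)
      omega
    exact hne ((eq_of_ds_zero hz1).symm.trans (eq_of_ds_zero hz2))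
  · have hd := hCdist U hU K hκC hne
    omega
end

section
/- For any subspaces U, V, W of a finite-dimensional vector space over a field, the subspace distance satisfies the triangle inequality: d_S(U,W) ≤ d_S(U,V) + d_S(V,W). -/
/-- The subspace distance `d_S(U,V) = dim(U+V) − dim(U∩V)` on subspaces of a
finite-dimensional vector space satisfies the triangle inequality. -/
theorem subspace_distance_triangle_inequality
    (K : Type*) [Field K] (V : Type*) [AddCommGroup V] [Module K V]
    [FiniteDimensional K V] (U W X : Submodule K V) :
    Module.finrank K ↥(U ⊔ X) - Module.finrank K ↥(U ⊓ X) ≤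
      (Module.finrank K ↥(U ⊔ W) - Module.finrank K ↥(U ⊓ W)) +
        (Module.finrank K ↥(W ⊔ X) - Module.finrank K ↥(W ⊓ X)) := by
  have e1 := Submodule.finrank_sup_add_finrank_inf_eq (U ⊔ W) (W ⊔ X)
  have e2 := Submodule.finrank_sup_add_finrank_inf_eq (U ⊓ W) (W ⊓ X)
  have h1 : Module.finrank K ↥(U ⊔ X) ≤ Module.finrank K ↥((U ⊔ W) ⊔ (W ⊔ X)) :=
    Submodule.finrank_mono (sup_le (le_sup_left.trans le_sup_left)
      (le_sup_right.trans le_sup_right))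
  have h2 : Module.finrank K ↥W ≤ Module.finrank K ↥((U ⊔ W) ⊓ (W ⊔ X)) :=
    Submodule.finrank_mono (le_inf le_sup_right le_sup_left)
  have h3 : Module.finrank K ↥((U ⊓ W) ⊔ (W ⊓ X)) ≤ Module.finrank K ↥W :=
    Submodule.finrank_mono (sup_le inf_le_right inf_le_left)
  have h4 : Module.finrank K ↥((U ⊓ W) ⊓ (W ⊓ X)) ≤ Module.finrank K ↥(U ⊓ X) :=
    Submodule.finrank_mono (le_inf (inf_le_left.trans inf_le_left)
      (inf_le_right.trans inf_le_right))
  have h5 : Module.finrank K ↥(U ⊓ W) ≤ Module.finrank K ↥(U ⊔ W) :=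
    Submodule.finrank_mono inf_le_sup
  have h6 : Module.finrank K ↥(W ⊓ X) ≤ Module.finrank K ↥(W ⊔ X) :=
    Submodule.finrank_mono inf_le_sup
  omega
end

section
/- Let F_q be a finite field, let k ≤ n and t ≥ k, and let κ be a k×n matrix over F_q of rank k. Let A, W ⊆ F_q^k be finite sets with |A| = |W| = t, and let W' be a subspace of F_q^n such that ⟨A ∩ W⟩_κ ⊆ W' and dim(W') ≤ t. Set y = |A ∩ W| − dim(⟨A ∩ W⟩_κ). Then d_S(W', rowsp(κ)) ≤ d_Δ(A, W) − (t − k) + 2y. -/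
/-- Upper bound on the subspace distance in the loosened subspace fuzzy
vault setting: if `|A| = |W| = t ≥ k`, `⟨A ∩ W⟩_κ ⊆ W'` and `dim W' ≤ t`, then with
`y = |A ∩ W| − dim ⟨A ∩ W⟩_κ`, one has `d_S(W', rowsp κ) ≤ d_Δ(A,W) − (t − k) + 2y`. -/
theorem subspace_distance_upper_bound
    (F : Type*) [Field F] [Fintype F] [DecidableEq F] (k n t : ℕ) (hkn : k ≤ n)
    (hkt : k ≤ t)
    (κ : Matrix (Fin k) (Fin n) F) (hκ : κ.rank = k)
    (A W : Finset (Fin k → F)) (hAcard : A.card = t) (hWcard : W.card = t)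
    (W' : Submodule F (Fin n → F))
    (hspan : Submodule.span F ((fun x => Matrix.vecMul x κ) '' ↑(A ∩ W)) ≤ W')
    (hW'dim : Module.finrank F W' ≤ t)
    (y : ℕ)
    (hy : y = (A ∩ W).card -
      Module.finrank F (Submodule.span F ((fun x => Matrix.vecMul x κ) '' ↑(A ∩ W)))) :
    ((Module.finrank F ↥(W' ⊔ LinearMap.range κ.vecMulLinear) -
        Module.finrank F ↥(W' ⊓ LinearMap.range κ.vecMulLinear) : ℕ) : ℤ) ≤
      (((A \ W).card + (W \ A).card : ℕ) : ℤ) - ((t : ℤ) - (k : ℤ)) + 2 * (y : ℤ) := by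
  classical
  set S : Submodule F (Fin n → F) :=
    Submodule.span F ((fun x => Matrix.vecMul x κ) '' ↑(A ∩ W)) with hS
  set R : Submodule F (Fin n → F) := LinearMap.range κ.vecMulLinear with hR
  have hSR : S ≤ R := by
    rw [hS, Submodule.span_le]
    rintro _ ⟨x, -, rfl⟩
    exact ⟨x, rfl⟩
  -- dim R = k
  have hRdim : Module.finrank F R = k := by
    have := Matrix.rank_eq_finrank_span_row κ
    rw [hκ] at this
    rw [hR, range_vecMulLinear]
    omega
  -- S as span of a finset image
  have hSfin : ((fun x => Matrix.vecMul x κ) '' ↑(A ∩ W)) =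
      (((A ∩ W).image (fun x => Matrix.vecMul x κ) : Finset (Fin n → F)) : Set (Fin n → F)) := by
    simp [Finset.coe_image]
  have hSle : Module.finrank F S ≤ (A ∩ W).card := by
    rw [hS, hSfin]
    exact le_trans (finrank_span_finset_le_card _) (Finset.card_image_le)
  -- y in ℤ
  have hy' : (y : ℤ) = ((A ∩ W).card : ℤ) - (Module.finrank F S : ℤ) := by
    rw [hy]; omega
  -- dim (W' ⊓ R) ≥ dim S
  have hle : Module.finrank F S ≤ Module.finrank F (W' ⊓ R : Submodule F (Fin n → F)) :=
    Submodule.finrank_mono (le_inf hspan hSR)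
  -- sup/inf dimension formula
  have hsum := Submodule.finrank_sup_add_finrank_inf_eq W' R
  -- card arithmetic
  have hAsd : (A \ W).card + (A ∩ W).card = t := by
    rw [Finset.card_sdiff_add_card_inter, hAcard]
  have hWsd : (W \ A).card + (A ∩ W).card = t := by
    rw [Finset.inter_comm A W, Finset.card_sdiff_add_card_inter, hWcard]
  have hWRdim : Module.finrank F (W' ⊔ R : Submodule F (Fin n → F)) ≤ t + k := by
    have := Submodule.finrank_add_le_finrank_add_finrank W' R
    omega
  have hmono : Module.finrank F (W' ⊓ R : Submodule F (Fin n → F)) ≤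
      Module.finrank F (W' ⊔ R : Submodule F (Fin n → F)) :=
    Submodule.finrank_mono (le_trans inf_le_left le_sup_left)
  omega
end

section
/- Let F_q be a finite field, let k ≤ n and t ≥ k, and let κ be a k×n matrix over F_q of rank k. Let A, W ⊆ F_q^k be finite sets with |A| = |W| = t, and let W' be a subspace of F_q^n such that W' ∩ rowsp(κ) ⊆ ⟨A ∩ W⟩_κ and dim(W') ≥ t − x. Then d_S(W', rowsp(κ)) ≥ d_Δ(A, W) − (t − k) − x. -/
/-- Lower bound on the subspace distance in the loosened subspace fuzzy
vault setting: if `|A| = |W| = t ≥ k`, `W' ∩ rowsp κ ⊆ ⟨A ∩ W⟩_κ` and `dim W' ≥ t − x`,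
then `d_S(W', rowsp κ) ≥ d_Δ(A,W) − (t − k) − x`. -/
theorem subspace_distance_lower_bound
    (F : Type*) [Field F] [Fintype F] [DecidableEq F] (k n t x : ℕ) (hkn : k ≤ n)
    (hkt : k ≤ t)
    (κ : Matrix (Fin k) (Fin n) F) (hκ : κ.rank = k)
    (A W : Finset (Fin k → F)) (hAcard : A.card = t) (hWcard : W.card = t)
    (W' : Submodule F (Fin n → F))
    (hinter : W' ⊓ LinearMap.range κ.vecMulLinear ≤
      Submodule.span F ((fun v => Matrix.vecMul v κ) '' ↑(A ∩ W)))
    (hW'dim : (t : ℤ) - (x : ℤ) ≤ (Module.finrank F W' : ℤ)) :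
    (((A \ W).card + (W \ A).card : ℕ) : ℤ) - ((t : ℤ) - (k : ℤ)) - (x : ℤ) ≤
      ((Module.finrank F ↥(W' ⊔ LinearMap.range κ.vecMulLinear) -
        Module.finrank F ↥(W' ⊓ LinearMap.range κ.vecMulLinear) : ℕ) : ℤ) := by
  set R := LinearMap.range κ.vecMulLinear with hR
  -- rank of the row space is k
  have hRdim : Module.finrank F R = k := by
    have : R = LinearMap.range (κ.transpose).mulVecLin := by
      rw [hR, Matrix.mulVecLin_transpose]
    rw [this]
    have := κ.rank_transpose
    rw [hκ] at this
    exact this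
  -- dimension of intersection is at most |A ∩ W|
  have hm : Module.finrank F ↥(W' ⊓ R) ≤ (A ∩ W).card := by
    have h1 : Module.finrank F ↥(W' ⊓ R) ≤
        Module.finrank F (Submodule.span F
          ((fun v => Matrix.vecMul v κ) '' ↑(A ∩ W))) :=
      Submodule.finrank_mono hinter
    have h2 : ((fun v => Matrix.vecMul v κ) '' ↑(A ∩ W)) =
        ((A ∩ W).image (fun v => Matrix.vecMul v κ) : Finset (Fin n → F)) := by
      simp [Finset.coe_image]
    rw [h2] at h1
    calc Module.finrank F ↥(W' ⊓ R) ≤ _ := h1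
      _ ≤ ((A ∩ W).image (fun v => Matrix.vecMul v κ)).card :=
        by simpa [Set.finrank] using finrank_span_finset_le_card (R := F) ((A ∩ W).image (fun v => Matrix.vecMul v κ))
      _ ≤ (A ∩ W).card := Finset.card_image_le
  have hsum : Module.finrank F ↥(W' ⊔ R) + Module.finrank F ↥(W' ⊓ R) =
      Module.finrank F W' + Module.finrank F R :=
    Submodule.finrank_sup_add_finrank_inf_eq W' R
  have hle : Module.finrank F ↥(W' ⊓ R) ≤ Module.finrank F ↥(W' ⊔ R) :=
    Submodule.finrank_mono (le_trans inf_le_left le_sup_left)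
  have hcast : ((Module.finrank F ↥(W' ⊔ R) - Module.finrank F ↥(W' ⊓ R) : ℕ) : ℤ)
      = (Module.finrank F ↥(W' ⊔ R) : ℤ) - (Module.finrank F ↥(W' ⊓ R) : ℤ) := by
    exact_mod_cast Int.ofNat_sub hle
  -- cardinalities
  have hAW : (A \ W).card + (A ∩ W).card = t := by
    rw [Finset.card_sdiff_add_card_inter, hAcard]
  have hWA : (W \ A).card + (A ∩ W).card = t := by
    rw [Finset.inter_comm A W, Finset.card_sdiff_add_card_inter, hWcard]
  rw [hcast]
  have hsum' : (Module.finrank F ↥(W' ⊔ R) : ℤ) + (Module.finrank F ↥(W' ⊓ R) : ℤ) =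
      (Module.finrank F W' : ℤ) + k := by
    rw [← hRdim]; exact_mod_cast hsum
  have hm' : (Module.finrank F ↥(W' ⊓ R) : ℤ) ≤ ((A ∩ W).card : ℤ) := by exact_mod_cast hm
  have hAW' : ((A \ W).card : ℤ) + ((A ∩ W).card : ℤ) = t := by exact_mod_cast hAW
  have hWA' : ((W \ A).card : ℤ) + ((A ∩ W).card : ℤ) = t := by exact_mod_cast hWA
  push_cast
  linarith
end

section
/- Let F_q be a finite field, let p ∈ F_q[x] be a monic irreducible polynomial of degree k, and let P be a k×k matrix over F_q whose minimal polynomial is p. Let n = ks with s ≥ 1. For any tuple (A_1, …, A_s) with each A_i ∈ F_q[P] (the set of polynomial expressions in P) and (A_1, …, A_s) ≠ (0, …, 0), the k×n block matrix (A_1 | ⋯ | A_s) has rank k, i.e., its row space is a k-dimensional subspace of F_q^n. -/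
/-- If `p` is a monic irreducible polynomial of degree `k` over the finite
field `F`, `P` is a `k × k` matrix with minimal polynomial `p`, and `(A_1, …, A_s)` is a
nonzero tuple of elements of `F[P]`, then the horizontally concatenated `k × ks` block
matrix `(A_1 | ⋯ | A_s)` has rank `k`; that is, its row space is a `k`-dimensional
subspace of `F^{ks}`. -/
theorem spread_block_matrix_rank
    (F : Type*) [Field F] [Fintype F] [DecidableEq F] (k s : ℕ) (hs : 1 ≤ s)
    (p : Polynomial F) (hmonic : p.Monic) (hirr : Irreducible p) (hdeg : p.natDegree = k)
    (P : Matrix (Fin k) (Fin k) F) (hmin : minpoly F P = p)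
    (A : Fin s → Matrix (Fin k) (Fin k) F)
    (hA : ∀ i, ∃ f : Polynomial F, Polynomial.aeval P f = A i)
    (hA0 : A ≠ 0)
    (M : Matrix (Fin k) (Fin s × Fin k) F)
    (hM : ∀ (i : Fin k) (j : Fin s × Fin k), M i j = A j.1 i j.2) :
    M.rank = k ∧
      Module.finrank F (Submodule.span F (Set.range fun i => M i)) = k := by
  -- pick a nonzero block
  obtain ⟨i0, hi0⟩ : ∃ i, A i ≠ 0 := by
    by_contra h
    push_neg at h
    exact hA0 (funext h)
  obtain ⟨f, hf⟩ := hA i0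
  -- p does not divide f
  have hpf : ¬ p ∣ f := by
    intro ⟨g, hg⟩
    apply hi0
    rw [← hf, hg, map_mul, ← hmin, minpoly.aeval, zero_mul]
  -- A i0 has a left inverse, hence is a unit
  have hcop : IsCoprime p f := hirr.coprime_iff_not_dvd.mpr hpf
  obtain ⟨a, b, hab⟩ := hcop
  have hleft : Polynomial.aeval P b * A i0 = 1 := by
    have := congrArg (Polynomial.aeval P) hab
    simpa [← hmin, minpoly.aeval, hf] using this
  -- rows of M are linearly independent
  have hli : LinearIndependent F M := by
    refine Fintype.linearIndependent_iff.mpr ?_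
    intro c hc i
    have hvm : Matrix.vecMul c (A i0) = 0 := by
      funext j
      have := congrFun hc (i0, j)
      simpa [Matrix.vecMul, dotProduct, hM] using this
    have : c = 0 := by
      have h2 : Matrix.vecMul (Matrix.vecMul c (A i0)) (Polynomial.aeval P b) = c := by
        rw [Matrix.vecMul_vecMul]
        have comm : A i0 * Polynomial.aeval P b = 1 := by
          rw [← hf, ← map_mul, mul_comm, map_mul, hf, hleft]
        rw [comm, Matrix.vecMul_one]
      rw [hvm, Matrix.zero_vecMul] at h2
      exact h2.symm
    simp [this]
  have h1 : M.rank = k := by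
    have := hli.rank_matrix
    simpa using this
  refine ⟨h1, ?_⟩
  have := M.rank_eq_finrank_span_row
  rw [h1] at this
  exact this.symm
end

section
/- Let F_q be a finite field, let p ∈ F_q[x] be a monic irreducible polynomial of degree k, let P be a k×k matrix over F_q whose minimal polynomial is p, and let n = ks with s ≥ 1. Let U = rowsp(A_1 | ⋯ | A_s) and V = rowsp(B_1 | ⋯ | B_s) where (A_1, …, A_s) and (B_1, …, B_s) are tuples of elements of F_q[P], each not identically zero. If U ≠ V, then U ∩ V = {0}; equivalently, any two distinct elements of the (k,n)-spread code S = {rowsp(A_1 | ⋯ | A_s) : A_i ∈ F_q[P], (A_1, …, A_s) ≠ (0, …, 0)} are at subspace distance 2k, so S has minimum subspace distance 2k. -/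
open Polynomial Matrix

/-- In `F[P]` with `P` having irreducible minimal polynomial, every nonzero element
is invertible, with inverse in `F[P]`. -/
lemma spread_aux_inv {F : Type*} [Field F] {k : ℕ}
    (p : Polynomial F) (hirr : Irreducible p)
    (P : Matrix (Fin k) (Fin k) F) (hmin : minpoly F P = p)
    (f : Polynomial F) (hf : Polynomial.aeval P f ≠ 0) :
    ∃ g : Polynomial F, Polynomial.aeval P f * Polynomial.aeval P g = 1 ∧
      Polynomial.aeval P g * Polynomial.aeval P f = 1 := by
  have hndvd : ¬ p ∣ f := by
    rintro ⟨c, rfl⟩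
    apply hf
    rw [_root_.map_mul, ← hmin, minpoly.aeval, zero_mul]
  obtain ⟨a, b, hab⟩ := hirr.coprime_iff_not_dvd.2 hndvd
  have h := congrArg (Polynomial.aeval P) hab
  rw [map_add, _root_.map_mul, _root_.map_mul, _root_.map_one, ← hmin, minpoly.aeval, mul_zero, zero_add] at h
  refine ⟨b, ?_, h⟩
  rw [← _root_.map_mul, mul_comm, _root_.map_mul, h]

/-- Any two distinct codewords of the `(k, ks)`-spread code
`S = {rowsp(A_1 | ⋯ | A_s) : A_i ∈ F[P], (A_1, …, A_s) ≠ 0}` (where `P` is a `k × k`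
matrix whose minimal polynomial is a monic irreducible polynomial `p` of degree `k`)
intersect trivially, and hence are at subspace distance `2k`; so `S` has minimum
subspace distance `2k`. -/
theorem spread_code_minimum_distance
    (F : Type*) [Field F] [Fintype F] [DecidableEq F] (k s : ℕ) (hs : 1 ≤ s)
    (p : Polynomial F) (hmonic : p.Monic) (hirr : Irreducible p) (hdeg : p.natDegree = k)
    (P : Matrix (Fin k) (Fin k) F) (hmin : minpoly F P = p)
    (S : Set (Submodule F (Fin s × Fin k → F)))
    (hS : S = {U | ∃ A : Fin s → Matrix (Fin k) (Fin k) F,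
      (∀ i, ∃ f : Polynomial F, Polynomial.aeval P f = A i) ∧ A ≠ 0 ∧
      U = LinearMap.range
        (Matrix.of fun (i : Fin k) (j : Fin s × Fin k) => A j.1 i j.2).vecMulLinear}) :
    ∀ U ∈ S, ∀ V ∈ S, U ≠ V →
      U ⊓ V = ⊥ ∧
      Module.finrank F ↥(U ⊔ V) - Module.finrank F ↥(U ⊓ V) = 2 * k := by
  classical
  subst hS
  rintro U ⟨A, hAmem, hAne, rfl⟩ V ⟨B, hBmem, hBne, rfl⟩ hUV
  set MA : Matrix (Fin k) (Fin s × Fin k) F :=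
    Matrix.of fun (i : Fin k) (j : Fin s × Fin k) => A j.1 i j.2 with hMA
  set MB : Matrix (Fin k) (Fin s × Fin k) F :=
    Matrix.of fun (i : Fin k) (j : Fin s × Fin k) => B j.1 i j.2 with hMB
  -- component formula
  have hcompA : ∀ (z : Fin k → F) (j : Fin s × Fin k), (z ᵥ* MA) j = (z ᵥ* A j.1) j.2 :=
    fun z j => rfl
  have hcompB : ∀ (z : Fin k → F) (j : Fin s × Fin k), (z ᵥ* MB) j = (z ᵥ* B j.1) j.2 :=
    fun z j => rfl
  -- inverses
  have hinv : ∀ (C : Matrix (Fin k) (Fin k) F), (∃ f : Polynomial F, Polynomial.aeval P f = C) → C ≠ 0 →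
      ∃ D : Matrix (Fin k) (Fin k) F, (∃ g : Polynomial F, Polynomial.aeval P g = D) ∧ C * D = 1 ∧ D * C = 1 := by
    rintro C ⟨f, rfl⟩ hC
    obtain ⟨g, h1, h2⟩ := spread_aux_inv p hirr P hmin f hC
    exact ⟨Polynomial.aeval P g, ⟨g, rfl⟩, h1, h2⟩
  -- injectivity of the spread maps
  have hinj : ∀ (C : Fin s → Matrix (Fin k) (Fin k) F),
      (∀ i, ∃ f : Polynomial F, Polynomial.aeval P f = C i) → C ≠ 0 →
      Function.Injective
        (Matrix.of fun (i : Fin k) (j : Fin s × Fin k) => C j.1 i j.2).vecMulLinear := by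
    intro C hCmem hCne
    obtain ⟨j0, hj0⟩ : ∃ j0, C j0 ≠ 0 := by
      by_contra h
      push_neg at h
      exact hCne (funext h)
    obtain ⟨D, _, hCD, _⟩ := hinv (C j0) (hCmem j0) hj0
    rw [injective_iff_map_eq_zero]
    intro z hz
    rw [Matrix.vecMulLinear_apply] at hz
    have h0 : z ᵥ* C j0 = 0 := by
      funext j2
      have := congrFun hz (j0, j2)
      exact this
    calc z = z ᵥ* (C j0 * D) := by rw [hCD, Matrix.vecMul_one]
      _ = (z ᵥ* C j0) ᵥ* D := (Matrix.vecMul_vecMul z _ _).symm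
      _ = 0 := by rw [h0, Matrix.zero_vecMul]
  -- ranks
  have hrank : ∀ (C : Fin s → Matrix (Fin k) (Fin k) F),
      (∀ i, ∃ f : Polynomial F, Polynomial.aeval P f = C i) → C ≠ 0 →
      Module.finrank F ↥(LinearMap.range
        (Matrix.of fun (i : Fin k) (j : Fin s × Fin k) => C j.1 i j.2).vecMulLinear) = k := by
    intro C hCmem hCne
    rw [LinearMap.finrank_range_of_inj (hinj C hCmem hCne), Module.finrank_fin_fun]
  -- the main claim: trivial intersection
  have hbot : LinearMap.range MA.vecMulLinear ⊓ LinearMap.range MB.vecMulLinear = ⊥ := by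
    by_contra hne
    obtain ⟨v, hv, hv0⟩ := Submodule.exists_mem_ne_zero_of_ne_bot hne
    obtain ⟨hvA, hvB⟩ := Submodule.mem_inf.1 hv
    obtain ⟨x, hx⟩ := hvA
    obtain ⟨y, hy⟩ := hvB
    rw [Matrix.vecMulLinear_apply] at hx hy
    have hcomp : ∀ i, x ᵥ* A i = y ᵥ* B i := by
      intro i
      funext j2
      have h1 := congrFun hx (i, j2)
      have h2 := congrFun hy (i, j2)
      rw [hcompA] at h1
      rw [hcompB] at h2
      rw [h1, h2]
    obtain ⟨⟨j0, j2⟩, hj⟩ : ∃ j, v j ≠ 0 := by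
      by_contra h
      push_neg at h
      exact hv0 (funext h)
    have hxA : x ᵥ* A j0 ≠ 0 := by
      intro h
      apply hj
      rw [← hx, hcompA, h]
      rfl
    have hAj0 : A j0 ≠ 0 := by
      intro h; rw [h] at hxA; exact hxA (Matrix.vecMul_zero x)
    have hBj0 : B j0 ≠ 0 := by
      intro h; rw [hcomp j0, h] at hxA; exact hxA (Matrix.vecMul_zero y)
    have hx0 : x ≠ 0 := by
      intro h; rw [h] at hxA; exact hxA (Matrix.zero_vecMul _)
    obtain ⟨CA, hCAmem, hACA, hCAA⟩ := hinv (A j0) (hAmem j0) hAj0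
    obtain ⟨CB, hCBmem, hBCB, hCBB⟩ := hinv (B j0) (hBmem j0) hBj0
    set D : Matrix (Fin k) (Fin k) F := A j0 * CB with hD
    have hDmem : ∃ g : Polynomial F, Polynomial.aeval P g = D := by
      obtain ⟨f1, hf1⟩ := hAmem j0
      obtain ⟨g1, hg1⟩ := hCBmem
      exact ⟨f1 * g1, by rw [_root_.map_mul, hf1, hg1]⟩
    have hxD : x ᵥ* D = y := by
      calc x ᵥ* D = (x ᵥ* A j0) ᵥ* CB := (Matrix.vecMul_vecMul x _ _).symm
        _ = (y ᵥ* B j0) ᵥ* CB := by rw [hcomp j0]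
        _ = y ᵥ* (B j0 * CB) := Matrix.vecMul_vecMul y _ _
        _ = y := by rw [hBCB, Matrix.vecMul_one]
    -- A i = D * B i for all i
    have hkey : ∀ i, A i = D * B i := by
      intro i
      by_contra hne'
      have hEmem : ∃ g : Polynomial F, Polynomial.aeval P g = A i - D * B i := by
        obtain ⟨fi, hfi⟩ := hAmem i
        obtain ⟨gd, hgd⟩ := hDmem
        obtain ⟨gi, hgi⟩ := hBmem i
        exact ⟨fi - gd * gi, by rw [map_sub, _root_.map_mul, hfi, hgd, hgi]⟩
      have hE0 : A i - D * B i ≠ 0 := sub_ne_zero.2 hne'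
      obtain ⟨E, _, hEE, _⟩ := hinv _ hEmem hE0
      have hxE : x ᵥ* (A i - D * B i) = 0 := by
        rw [Matrix.vecMul_sub, hcomp i, ← hxD, Matrix.vecMul_vecMul, sub_eq_zero]
      apply hx0
      calc x = x ᵥ* ((A i - D * B i) * E) := by rw [hEE, Matrix.vecMul_one]
        _ = (x ᵥ* (A i - D * B i)) ᵥ* E := (Matrix.vecMul_vecMul x _ _).symm
        _ = 0 := by rw [hxE, Matrix.zero_vecMul]
    -- U = V, contradiction
    apply hUV
    apply le_antisymm
    · rintro w ⟨z, rfl⟩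
      refine ⟨z ᵥ* D, ?_⟩
      rw [Matrix.vecMulLinear_apply, Matrix.vecMulLinear_apply]
      funext j
      rw [hcompA, hcompB, Matrix.vecMul_vecMul, hkey j.1]
    · rintro w ⟨z, rfl⟩
      refine ⟨z ᵥ* (B j0 * CA), ?_⟩
      rw [Matrix.vecMulLinear_apply, Matrix.vecMulLinear_apply]
      funext j
      rw [hcompA, hcompB, Matrix.vecMul_vecMul, hkey j.1]
      have : B j0 * CA * (D * B j.1) = B j.1 := by
        rw [hD]
        calc B j0 * CA * (A j0 * CB * B j.1) = B j0 * (CA * A j0) * (CB * B j.1) := by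
              noncomm_ring
          _ = B j.1 := by rw [hCAA, mul_one, ← mul_assoc, hBCB, one_mul]
      rw [this]
  refine ⟨hbot, ?_⟩
  have hsum := Submodule.finrank_sup_add_finrank_inf_eq
    (LinearMap.range MA.vecMulLinear) (LinearMap.range MB.vecMulLinear)
  rw [hbot, finrank_bot] at hsum ⊢
  rw [hrank A hAmem hAne, hrank B hBmem hBne] at hsum
  omega
end
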